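/- arXiv:1703.10935 — 3 statements merged into one kernel-verified Lean document; each statement's English description precedes it below -/
import Mathlib

section
/- If X ∼ N(μ, σ²) then the componentwise risk of the pretest estimator m_PT(x,λ) = 1(|x|>λ)x is E[(m_PT(X,λ) − μ)²] = (1 + Φ((−λ−μ)/σ) − Φ((λ−μ)/σ))σ² + (((λ−μ)/σ)φ((λ−μ)/σ) − ((−λ−μ)/σ)φ((−λ−μ)/σ))σ² + (Φ((λ−μ)/σ) − Φ((−λ−μ)/σ))μ². -/
/-!
Write `X = μ + σ Z` with `Z ∼ N(0, 1)`. The loss `(m_PT(X, λ) - μ)²` equals `σ² Z²` when `|X| > λ`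
and `μ²` when `|X| ≤ λ`, i.e. when `Z ∈ [a, b]` with `a = (-λ - μ) / σ`, `b = (λ - μ) / σ`. Hence the
risk is `σ² E[Z²] + E[(μ² - σ² Z²); a ≤ Z ≤ b]`, and the truncated second moment is obtained by
integrating by parts with `φ' = -z φ`:
`∫_a^b z² φ = Φ(b) - Φ(a) + a φ(a) - b φ(b)`.
-/

open MeasureTheory ProbabilityTheory

/-- Standard normal density. -/
noncomputable def stdGaussPDF (v : ℝ) : ℝ := (Real.sqrt (2 * Real.pi))⁻¹ * Real.exp (-v^2 / 2)

/-- Standard normal cumulative distribution function. -/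
noncomputable def stdGaussCDF (t : ℝ) : ℝ := ∫ v in Set.Iic t, stdGaussPDF v

/-- Hard thresholding (pretest) estimating function. -/
noncomputable def hardThresh (x lam : ℝ) : ℝ := if lam < |x| then x else 0

open Set
open scoped NNReal

lemma stdGaussPDF_eq_gaussianPDFReal : stdGaussPDF = gaussianPDFReal 0 1 := by
  ext v
  simp [stdGaussPDF, gaussianPDFReal]

@[fun_prop]
lemma continuous_stdGaussPDF : Continuous stdGaussPDF := by
  unfold stdGaussPDF
  fun_prop

lemma hasDerivAt_stdGaussPDF (v : ℝ) : HasDerivAt stdGaussPDF (-v * stdGaussPDF v) v := by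
  refine ((((hasDerivAt_pow 2 v).neg.div_const 2).exp).const_mul _).congr_deriv ?_
  simp only [stdGaussPDF, Pi.neg_apply]
  ring

lemma stdGaussCDF_sub_stdGaussCDF (a b : ℝ) :
    stdGaussCDF b - stdGaussCDF a = ∫ v in a..b, stdGaussPDF v := by
  have h : Integrable stdGaussPDF := by
    rw [stdGaussPDF_eq_gaussianPDFReal]
    exact integrable_gaussianPDFReal 0 1
  exact intervalIntegral.integral_Iic_sub_Iic h.integrableOn h.integrableOn

lemma integral_sq_mul_stdGaussPDF (a b : ℝ) :
    ∫ v in a..b, v ^ 2 * stdGaussPDF v =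
      stdGaussCDF b - stdGaussCDF a + (a * stdGaussPDF a - b * stdGaussPDF b) := by
  have hderiv (v : ℝ) :
      HasDerivAt (fun v => -(v * stdGaussPDF v)) (v ^ 2 * stdGaussPDF v - stdGaussPDF v) v := by
    refine ((hasDerivAt_id v).mul (hasDerivAt_stdGaussPDF v)).neg.congr_deriv ?_
    simp only [id_eq]
    ring
  have hftc := intervalIntegral.integral_eq_sub_of_hasDerivAt (fun v _ => hderiv v)
    (Continuous.intervalIntegrable (by fun_prop) a b)
  rw [intervalIntegral.integral_sub (Continuous.intervalIntegrable (by fun_prop) a b)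
    (Continuous.intervalIntegrable (by fun_prop) a b), ← stdGaussCDF_sub_stdGaussCDF] at hftc
  linarith

lemma integral_stdGaussPDF_mul_sub_mul_sq (a b c d : ℝ) :
    ∫ v in a..b, stdGaussPDF v * (c - d * v ^ 2) =
      c * (stdGaussCDF b - stdGaussCDF a) -
        d * (stdGaussCDF b - stdGaussCDF a + (a * stdGaussPDF a - b * stdGaussPDF b)) := by
  rw [← integral_sq_mul_stdGaussPDF, stdGaussCDF_sub_stdGaussCDF,
    ← intervalIntegral.integral_const_mul, ← intervalIntegral.integral_const_mul,
    ← intervalIntegral.integral_sub (Continuous.intervalIntegrable (by fun_prop) a b)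
      (Continuous.intervalIntegrable (by fun_prop) a b)]
  congr with v
  ring

lemma integral_sq_gaussianReal (μ : ℝ) (v : ℝ≥0) :
    ∫ x, x ^ 2 ∂gaussianReal μ v = v + μ ^ 2 := by
  have h := variance_eq_sub (memLp_id_gaussianReal (μ := μ) (v := v) 2)
  simp only [variance_id_gaussianReal, Pi.pow_apply, id_eq, integral_id_gaussianReal] at h
  linarith

lemma gaussianReal_map_const_add_mul (μ σ : ℝ) :
    (gaussianReal 0 1).map (fun z => μ + σ * z) = gaussianReal μ ⟨σ ^ 2, sq_nonneg σ⟩ := by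
  have : (fun z => μ + σ * z) = (μ + ·) ∘ (σ * ·) := rfl
  rw [this, ← Measure.map_map (by fun_prop) (by fun_prop), gaussianReal_map_const_mul,
    gaussianReal_map_const_add]
  congr 1
  · simp
  · ext
    simp only [mul_one]
    rfl

lemma setIntegral_Icc_gaussianReal_zero_one {a b : ℝ} (hab : a ≤ b) (f : ℝ → ℝ) :
    ∫ z in Icc a b, f z ∂gaussianReal 0 1 = ∫ z in a..b, stdGaussPDF z * f z := by
  rw [intervalIntegral.integral_of_le hab, ← integral_Icc_eq_integral_Ioc,
    ← integral_indicator measurableSet_Icc, ← integral_indicator measurableSet_Icc,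
    integral_gaussianReal_eq_integral_smul one_ne_zero, stdGaussPDF_eq_gaussianPDFReal]
  congr with z
  by_cases hz : z ∈ Icc a b <;> simp [hz]

lemma measurable_hardThresh (lam : ℝ) : Measurable fun x => hardThresh x lam :=
  Measurable.ite (measurableSet_lt measurable_const measurable_abs) measurable_id measurable_const

lemma abs_add_mul_le_iff_mem_Icc {μ σ lam z : ℝ} (hσ : 0 < σ) :
    |μ + σ * z| ≤ lam ↔ z ∈ Icc ((-lam - μ) / σ) ((lam - μ) / σ) := by
  rw [abs_le, mem_Icc, div_le_iff₀ hσ, le_div_iff₀ hσ]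
  constructor <;> rintro ⟨h₁, h₂⟩ <;> constructor <;> linarith

lemma sq_hardThresh_add_mul_sub {μ σ : ℝ} (lam z : ℝ) (hσ : 0 < σ) :
    (hardThresh (μ + σ * z) lam - μ) ^ 2 = σ ^ 2 * z ^ 2 +
      (Icc ((-lam - μ) / σ) ((lam - μ) / σ)).indicator (fun z => μ ^ 2 - σ ^ 2 * z ^ 2) z := by
  by_cases h : lam < |μ + σ * z|
  · have hz : z ∉ Icc ((-lam - μ) / σ) ((lam - μ) / σ) := by
      rw [← abs_add_mul_le_iff_mem_Icc hσ]
      exact not_le.mpr h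
    simp only [hardThresh, if_pos h, indicator_of_notMem hz]
    ring
  · have hz : z ∈ Icc ((-lam - μ) / σ) ((lam - μ) / σ) :=
      (abs_add_mul_le_iff_mem_Icc hσ).mp (not_lt.mp h)
    simp only [hardThresh, if_neg h, indicator_of_mem hz]
    ring

/-- Componentwise risk of the pretest estimator under `X ∼ N(μ, σ²)`. -/
theorem pretest_componentwise_risk (μ σ lam : ℝ) (hσ : 0 < σ) (hlam : 0 ≤ lam) :
    ∫ x, (hardThresh x lam - μ)^2 ∂(gaussianReal μ ⟨σ^2, sq_nonneg σ⟩) =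
      (1 + stdGaussCDF ((-lam - μ) / σ) - stdGaussCDF ((lam - μ) / σ)) * σ^2 +
      (((lam - μ) / σ) * stdGaussPDF ((lam - μ) / σ) -
        ((-lam - μ) / σ) * stdGaussPDF ((-lam - μ) / σ)) * σ^2 +
      (stdGaussCDF ((lam - μ) / σ) - stdGaussCDF ((-lam - μ) / σ)) * μ^2 := by
  have hab : (-lam - μ) / σ ≤ (lam - μ) / σ := div_le_div_of_nonneg_right (by linarith) hσ.le
  have hsq : Integrable (fun z : ℝ => z ^ 2) (gaussianReal 0 1) := by
    simpa using (memLp_id_gaussianReal (μ := 0) (v := 1) 2).integrable_sq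
  have hind : Integrable ((Icc ((-lam - μ) / σ) ((lam - μ) / σ)).indicator
      fun z => μ ^ 2 - σ ^ 2 * z ^ 2) (gaussianReal 0 1) :=
    ((integrable_const _).sub (hsq.const_mul _)).indicator measurableSet_Icc
  rw [← gaussianReal_map_const_add_mul, integral_map (by fun_prop)
    (((measurable_hardThresh lam).sub_const μ).pow_const 2).aestronglyMeasurable]
  simp_rw [sq_hardThresh_add_mul_sub lam _ hσ]
  rw [integral_add (hsq.const_mul _) hind, integral_const_mul, integral_sq_gaussianReal,
    integral_indicator measurableSet_Icc, setIntegral_Icc_gaussianReal_zero_one hab,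
    integral_stdGaussPDF_mul_sub_mul_sq]
  push_cast
  ring
end

section
/- If X ∼ N(μ, σ²) then the componentwise risk of the lasso (soft-threshold) estimator satisfies E[(m_L(X,λ) − μ)²] = E[(m_PT(X,λ) − μ)²] + λ² P(|X| > λ) − 2λσ(φ((−λ−μ)/σ) + φ((λ−μ)/σ)), where m_PT is the hard-threshold estimator. -/
open MeasureTheory ProbabilityTheory

/-- Soft thresholding (lasso) estimating function. -/
noncomputable def softThresh (x lam : ℝ) : ℝ :=
  if x < -lam then x + lam else if lam < x then x - lam else 0

/-!
Pointwise, soft thresholding is hard thresholding shrunk by `λ` towards zero on `{|x| > λ}`,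
so `(m_L - μ)² = (m_PT - μ)² + λ² 1{|x| > λ} + 2λ (x - μ) 1{x < -λ} - 2λ (x - μ) 1{x > λ}`.
The truncated first moments are explicit because `(x - μ) p(x) = -v p'(x)` for the
`N(μ, v)` density `p`, so `∫_{x > a} (x - μ) p = v p(a)` and `∫_{x < a} (x - μ) p = -v p(a)`;
finally `σ² p(a) = σ φ((a - μ) / σ)`.
-/

open Set Filter Topology NNReal

lemma hardThresh_eq_indicator (x lam : ℝ) :
    hardThresh x lam = {y : ℝ | lam < |y|}.indicator id x := by
  simp [hardThresh, indicator_apply]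

lemma sq_softThresh_sub {lam : ℝ} (hlam : 0 ≤ lam) (μ x : ℝ) :
    (softThresh x lam - μ) ^ 2 = (hardThresh x lam - μ) ^ 2
      + {y : ℝ | lam < |y|}.indicator (fun _ ↦ lam ^ 2) x
      + 2 * lam * (Iio (-lam)).indicator (· - μ) x
      - 2 * lam * (Ioi lam).indicator (· - μ) x := by
  simp only [softThresh, hardThresh, indicator_apply, mem_ofPred_eq, mem_Iio, mem_Ioi]
  split_ifs <;> first | (exfalso; cases abs_cases x <;> linarith) | ring

section GaussianTail

variable (μ : ℝ) (v : ℝ≥0)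

lemma hasDerivAt_neg_mul_gaussianPDFReal (x : ℝ) :
    HasDerivAt (fun x ↦ -(v * gaussianPDFReal μ v x)) ((x - μ) * gaussianPDFReal μ v x) x := by
  rcases eq_or_ne v 0 with rfl | hv
  · simpa using hasDerivAt_const x (0 : ℝ)
  have hv' : (v : ℝ) ≠ 0 := by exact_mod_cast hv
  have h : HasDerivAt (fun y ↦ -(y - μ) ^ 2 / (2 * v)) (-(x - μ) / v) x := by
    refine ((((hasDerivAt_id' x).sub_const μ).pow 2).neg.div_const (2 * (v : ℝ))).congr_deriv ?_
    field_simp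
    ring
  have hp : HasDerivAt (gaussianPDFReal μ v) (-(x - μ) / v * gaussianPDFReal μ v x) x :=
    (h.exp.const_mul (√(2 * Real.pi * v))⁻¹).congr_deriv (by rw [gaussianPDFReal]; ring)
  refine (hp.const_mul (v : ℝ)).neg.congr_deriv ?_
  field_simp

lemma integrable_sub_mul_gaussianPDFReal :
    Integrable (fun x ↦ (x - μ) * gaussianPDFReal μ v x) := by
  rcases eq_or_ne v 0 with rfl | hv
  · simp
  have hb : 0 < (2 * (v : ℝ))⁻¹ := by positivity
  have h := ((integrable_mul_exp_neg_mul_sq hb).comp_sub_right μ).const_mul (√(2 * Real.pi * v))⁻¹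
  convert h using 2 with x
  simp only [gaussianPDFReal]
  field_simp

lemma integral_Ioi_sub_mul_gaussianPDFReal (a : ℝ) :
    ∫ x in Ioi a, (x - μ) * gaussianPDFReal μ v x = v * gaussianPDFReal μ v a := by
  have hF : Tendsto (fun x ↦ -(v * gaussianPDFReal μ v x)) atTop (𝓝 0) :=
    tendsto_zero_of_hasDerivAt_of_integrableOn_Ioi (a := a)
      (fun x _ ↦ hasDerivAt_neg_mul_gaussianPDFReal μ v x)
      (integrable_sub_mul_gaussianPDFReal μ v).integrableOn
      ((integrable_gaussianPDFReal μ v).const_mul _).neg.integrableOn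
  rw [integral_Ioi_of_hasDerivAt_of_tendsto' (fun x _ ↦ hasDerivAt_neg_mul_gaussianPDFReal μ v x)
    (integrable_sub_mul_gaussianPDFReal μ v).integrableOn hF]
  ring

lemma integral_Iio_sub_mul_gaussianPDFReal (a : ℝ) :
    ∫ x in Iio a, (x - μ) * gaussianPDFReal μ v x = -(v * gaussianPDFReal μ v a) := by
  have hF : Tendsto (fun x ↦ -(v * gaussianPDFReal μ v x)) atBot (𝓝 0) :=
    tendsto_zero_of_hasDerivAt_of_integrableOn_Iic (a := a)
      (fun x _ ↦ hasDerivAt_neg_mul_gaussianPDFReal μ v x)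
      (integrable_sub_mul_gaussianPDFReal μ v).integrableOn
      ((integrable_gaussianPDFReal μ v).const_mul _).neg.integrableOn
  rw [← integral_Iic_eq_integral_Iio, integral_Iic_of_hasDerivAt_of_tendsto'
    (fun x _ ↦ hasDerivAt_neg_mul_gaussianPDFReal μ v x)
    (integrable_sub_mul_gaussianPDFReal μ v).integrableOn hF, sub_zero]

lemma integral_indicator_Ioi_sub_gaussianReal (a : ℝ) :
    ∫ x, (Ioi a).indicator (· - μ) x ∂gaussianReal μ v = v * gaussianPDFReal μ v a := by
  rcases eq_or_ne v 0 with rfl | hv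
  · simp [gaussianReal_zero_var]
  simp_rw [integral_gaussianReal_eq_integral_smul hv, smul_eq_mul, ← indicator_mul_right,
    integral_indicator measurableSet_Ioi, mul_comm (gaussianPDFReal μ v _)]
  exact integral_Ioi_sub_mul_gaussianPDFReal μ v a

lemma integral_indicator_Iio_sub_gaussianReal (a : ℝ) :
    ∫ x, (Iio a).indicator (· - μ) x ∂gaussianReal μ v = -(v * gaussianPDFReal μ v a) := by
  rcases eq_or_ne v 0 with rfl | hv
  · simp [gaussianReal_zero_var]
  simp_rw [integral_gaussianReal_eq_integral_smul hv, smul_eq_mul, ← indicator_mul_right,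
    integral_indicator measurableSet_Iio, mul_comm (gaussianPDFReal μ v _)]
  exact integral_Iio_sub_mul_gaussianPDFReal μ v a

end GaussianTail

lemma coe_mul_gaussianPDFReal_eq_mul_stdGaussPDF {v : ℝ≥0} {σ : ℝ} (hσ : 0 ≤ σ)
    (hv : (v : ℝ) = σ ^ 2) (μ a : ℝ) :
    v * gaussianPDFReal μ v a = σ * stdGaussPDF ((a - μ) / σ) := by
  rcases hσ.eq_or_lt with rfl | hσ
  · simp [show v = 0 by simpa using hv]
  simp only [gaussianPDFReal, stdGaussPDF, hv]
  rw [Real.sqrt_mul (by positivity) (σ ^ 2), Real.sqrt_sq hσ.le, div_pow]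
  field_simp

theorem integral_sq_softThresh_sub_gaussianReal (μ : ℝ) (v : ℝ≥0) {lam : ℝ} (hlam : 0 ≤ lam) :
    ∫ x, (softThresh x lam - μ) ^ 2 ∂gaussianReal μ v =
      ∫ x, (hardThresh x lam - μ) ^ 2 ∂gaussianReal μ v +
      lam ^ 2 * (gaussianReal μ v {x : ℝ | lam < |x|}).toReal -
      2 * lam * (v * gaussianPDFReal μ v (-lam) + v * gaussianPDFReal μ v lam) := by
  have hS : MeasurableSet {x : ℝ | lam < |x|} := measurableSet_lt measurable_const measurable_abs
  have hX : MemLp id 2 (gaussianReal μ v) := memLp_id_gaussianReal 2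
  have hCentered : Integrable (· - μ) (gaussianReal μ v) :=
    (hX.integrable one_le_two).sub (integrable_const μ)
  have hHard : Integrable (fun x ↦ (hardThresh x lam - μ) ^ 2) (gaussianReal μ v) := by
    simp_rw [hardThresh_eq_indicator]
    exact ((hX.indicator hS).sub (memLp_const μ)).integrable_sq
  have hTail : Integrable ({x : ℝ | lam < |x|}.indicator fun _ ↦ lam ^ 2) (gaussianReal μ v) :=
    (integrable_const _).indicator hS
  have hLow : Integrable ((Iio (-lam)).indicator (· - μ)) (gaussianReal μ v) :=
    hCentered.indicator measurableSet_Iio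
  have hUp : Integrable ((Ioi lam).indicator (· - μ)) (gaussianReal μ v) :=
    hCentered.indicator measurableSet_Ioi
  simp_rw [sq_softThresh_sub hlam μ]
  rw [integral_sub, integral_add, integral_add, integral_const_mul, integral_const_mul,
    integral_indicator_const _ hS, integral_indicator_Iio_sub_gaussianReal,
    integral_indicator_Ioi_sub_gaussianReal, smul_eq_mul, measureReal_def]
  · ring
  all_goals fun_prop

/-- If `X ∼ N(μ, σ²)` then the componentwise risk of the lasso (soft-threshold) estimator equals
the risk of the pretest (hard-threshold) estimator plus
`λ² P(|X| > λ) − 2λσ(φ((−λ−μ)/σ) + φ((λ−μ)/σ))`. -/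
theorem lasso_risk_eq_pretest_risk (μ σ lam : ℝ) (hσ : 0 < σ) (hlam : 0 ≤ lam) :
    ∫ x, (softThresh x lam - μ)^2 ∂(gaussianReal μ ⟨σ^2, sq_nonneg σ⟩) =
      (∫ x, (hardThresh x lam - μ)^2 ∂(gaussianReal μ ⟨σ^2, sq_nonneg σ⟩)) +
      lam^2 * ((gaussianReal μ ⟨σ^2, sq_nonneg σ⟩) {x : ℝ | lam < |x|}).toReal -
      2 * lam * σ * (stdGaussPDF ((-lam - μ) / σ) + stdGaussPDF ((lam - μ) / σ)) := by
  have hscale :=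
    coe_mul_gaussianPDFReal_eq_mul_stdGaussPDF (v := ⟨σ ^ 2, sq_nonneg σ⟩) hσ.le rfl μ
  rw [integral_sq_softThresh_sub_gaussianReal μ ⟨σ ^ 2, sq_nonneg σ⟩ hlam, hscale, hscale]
  ring
end

section
/- Uniform loss consistency via risk estimation: suppose sup_{λ} |L_n(λ) − R̄_π(λ)| → 0 in probability uniformly over π ∈ Q, and there exist functions r̄_π(λ), v̄_π, and data-dependent r_n(λ) with R̄_π(λ) = r̄_π(λ) + v̄_π and sup_λ |r_n(λ) − r̄_π(λ)| → 0 in probability uniformly over π ∈ Q. Then for λ̂_n = argmin_λ r_n(λ), |L_n(λ̂_n) − inf_λ L_n(λ)| → 0 in probability uniformly over π ∈ Q. -/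
open MeasureTheory Filter

/-!
Off an event of vanishing probability, `L_n` is uniformly within `ε/4` of `R̄_π = r̄_π + v̄_π`
and `r_n` uniformly within `ε/4` of `r̄_π`. There, since `λ̂_n` minimizes `r_n` and the
constant `v̄_π` cancels in differences,
`L_n(λ̂_n) - L_n(λ) ≤ (r̄_π(λ̂_n) - r̄_π(λ)) + ε/2 ≤ (r_n(λ̂_n) - r_n(λ)) + ε ≤ ε`,
so `L_n(λ̂_n)` is within `ε` of `inf_λ L_n(λ)`.
-/

section Deterministic

variable {ι : Type*}

theorem le_add_of_minimizer_of_abs_sub_le {L R r rbar : ι → ℝ} {c δ₁ δ₂ : ℝ} {a : ι}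
    (hdecomp : ∀ x, R x = rbar x + c) (hmin : ∀ x, r a ≤ r x)
    (hL : ∀ x, |L x - R x| ≤ δ₁) (hr : ∀ x, |r x - rbar x| ≤ δ₂) (x : ι) :
    L a ≤ L x + (2 * δ₁ + 2 * δ₂) := by
  have hLa := (abs_le.1 (hL a)).2
  have hLx := (abs_le.1 (hL x)).1
  have hra := (abs_le.1 (hr a)).1
  have hrx := (abs_le.1 (hr x)).2
  linarith [hdecomp a, hdecomp x, hmin x]

theorem abs_sub_ciInf_le_of_forall_le_add [Nonempty ι] {L : ι → ℝ} {a : ι} {δ : ℝ}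
    (hbdd : BddBelow (Set.range L)) (h : ∀ x, L a ≤ L x + δ) :
    |L a - ⨅ x, L x| ≤ δ := by
  have hinf_le : ⨅ x, L x ≤ L a := ciInf_le hbdd a
  have le_inf : L a - δ ≤ ⨅ x, L x := le_ciInf fun x => by linarith [h x]
  rw [abs_le]
  constructor <;> linarith

end Deterministic

theorem tendsto_iSup_measure_of_subset_union {Ω Q : Type*} [MeasurableSpace Ω]
    {P : Q → Measure Ω} {S A B : ℕ → Q → Set Ω} (hsub : ∀ n π, S n π ⊆ A n π ∪ B n π)
    (hA : Tendsto (fun n => ⨆ π, P π (A n π)) atTop (nhds 0))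
    (hB : Tendsto (fun n => ⨆ π, P π (B n π)) atTop (nhds 0)) :
    Tendsto (fun n => ⨆ π, P π (S n π)) atTop (nhds 0) := by
  have hbound : ∀ n, ⨆ π, P π (S n π) ≤ (⨆ π, P π (A n π)) + ⨆ π, P π (B n π) :=
    fun n => iSup_le fun π => calc
      P π (S n π) ≤ P π (A n π ∪ B n π) := measure_mono (hsub n π)
      _ ≤ P π (A n π) + P π (B n π) := measure_union_le _ _
      _ ≤ _ := add_le_add (le_iSup (fun π => P π (A n π)) π) (le_iSup (fun π => P π (B n π)) π)
  have hsum := hA.add hB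
  rw [add_zero] at hsum
  exact tendsto_of_tendsto_of_tendsto_of_le_of_le tendsto_const_nhds hsum (fun _ => zero_le) hbound

theorem uniform_loss_consistency_general {Ω : Type*} [MeasurableSpace Ω] {Q : Type*}
    (P : Q → Measure Ω)
    (L : ℕ → ENNReal → Ω → ℝ) (hLnonneg : ∀ n lam ω, 0 ≤ L n lam ω)
    (Rbar : Q → ENNReal → ℝ)
    (r : ℕ → ENNReal → Ω → ℝ) (rbar : Q → ENNReal → ℝ) (vbar : Q → ℝ)
    (hdecomp : ∀ π lam, Rbar π lam = rbar π lam + vbar π)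
    (lamhat : ℕ → Ω → ENNReal)
    (hmin : ∀ n ω lam, r n (lamhat n ω) ω ≤ r n lam ω)
    (h1 : ∀ ε > (0 : ℝ), Tendsto
      (fun n => ⨆ π, P π {ω | ∃ lam, ε < |L n lam ω - Rbar π lam|}) atTop (nhds 0))
    (h2 : ∀ ε > (0 : ℝ), Tendsto
      (fun n => ⨆ π, P π {ω | ∃ lam, ε < |r n lam ω - rbar π lam|}) atTop (nhds 0)) :
    ∀ ε > (0 : ℝ), Tendsto
      (fun n => ⨆ π, P π {ω | ε < |L n (lamhat n ω) ω - ⨅ lam, L n lam ω|}) atTop (nhds 0) := by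
  intro ε hε
  refine tendsto_iSup_measure_of_subset_union (fun n π ω hω => ?_)
    (h1 (ε / 4) (by positivity)) (h2 (ε / 4) (by positivity))
  by_contra hgood
  simp only [Set.mem_union, Set.mem_ofPred_eq, not_or, not_exists, not_lt] at hgood hω
  have hbdd : BddBelow (Set.range fun lam => L n lam ω) :=
    ⟨0, by rintro _ ⟨lam, rfl⟩; exact hLnonneg n lam ω⟩
  have hnear := abs_sub_ciInf_le_of_forall_le_add hbdd
    (le_add_of_minimizer_of_abs_sub_le (hdecomp π) (hmin n ω) hgood.1 hgood.2)
  linarith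

/-- Uniform loss consistency via risk estimation (Theorem 2).  `Q` indexes the data generating
processes `π`, with associated probability measures `P π` on a sample space `Ω`.  `L n lam` is the
compound loss, `Rbar π lam` the integrated risk, `r n lam` the empirical risk criterion with
population counterpart `rbar π lam` satisfying `Rbar π lam = rbar π lam + vbar π`, and
`lamhat n ω` minimizes `r n · ω`.  If `sup_λ |L_n(λ) − R̄_π(λ)| → 0` and
`sup_λ |r_n(λ) − r̄_π(λ)| → 0` in probability uniformly over `π ∈ Q`, then
`|L_n(λ̂_n) − inf_λ L_n(λ)| → 0` in probability uniformly over `π ∈ Q`. -/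
theorem uniform_loss_consistency {Ω : Type*} [MeasurableSpace Ω] {Q : Type*}
    (P : Q → Measure Ω) (hP : ∀ π, IsProbabilityMeasure (P π))
    (L : ℕ → ENNReal → Ω → ℝ) (hLnonneg : ∀ n lam ω, 0 ≤ L n lam ω)
    (Rbar : Q → ENNReal → ℝ)
    (r : ℕ → ENNReal → Ω → ℝ) (rbar : Q → ENNReal → ℝ) (vbar : Q → ℝ)
    (hdecomp : ∀ π lam, Rbar π lam = rbar π lam + vbar π)
    (lamhat : ℕ → Ω → ENNReal)
    (hmin : ∀ n ω lam, r n (lamhat n ω) ω ≤ r n lam ω)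
    (h1 : ∀ ε > (0 : ℝ), Tendsto
      (fun n => ⨆ π, P π {ω | ∃ lam, ε < |L n lam ω - Rbar π lam|}) atTop (nhds 0))
    (h2 : ∀ ε > (0 : ℝ), Tendsto
      (fun n => ⨆ π, P π {ω | ∃ lam, ε < |r n lam ω - rbar π lam|}) atTop (nhds 0)) :
    ∀ ε > (0 : ℝ), Tendsto
      (fun n => ⨆ π, P π {ω | ε < |L n (lamhat n ω) ω - ⨅ lam, L n lam ω|}) atTop (nhds 0) :=
  uniform_loss_consistency_general P L hLnonneg Rbar r rbar vbar hdecomp lamhat hmin h1 h2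
end
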